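/- For λ-term nodes ⟨t₁, p₁⟩ and ⟨t₂, p₂⟩, if globalize(t₁)[p₁] = globalize(t₂)[p₂], then ⟨t₁, p₁⟩ and ⟨t₂, p₂⟩ are bisimilar. -/

import Mathlib

namespace HashAlpha

/-- g-terms: λ-terms with de Bruijn indices, extended with global variables `gvar t`. -/
inductive GTerm : Type
  | var : ℕ → GTerm
  | app : GTerm → GTerm → GTerm
  | lam : GTerm → GTerm
  | gvar : GTerm → GTerm
  deriving DecidableEq

/-- A g-term is a pure λ-term if it contains no global variables. -/
def GTerm.IsPure : GTerm → Prop
  | .var _ => True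
  | .app a b => a.IsPure ∧ b.IsPure
  | .lam a => a.IsPure
  | .gvar _ => False

/-- Directions for term positions: ↓, ↙, ↘. -/
inductive Dir : Type
  | down | left | right
  deriving DecidableEq

/-- A term position is a word over {↓, ↙, ↘}. -/
abbrev Pos := List Dir

/-- `|p|_λ`: the number of ↓'s in a position. -/
def lamDepth (p : Pos) : ℕ := p.count Dir.down

/-- Term indexing `t[p]` (partial; does not descend into global variables). -/
def GTerm.index : GTerm → Pos → Option GTerm
  | t, [] => some t
  | .app a _, .left :: p => a.index p
  | .app _ b, .right :: p => b.index p
  | .lam a, .down :: p => a.index p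
  | _, _ => none

/-- `valid(t)`: the set of positions where `t[p]` is defined. -/
def Valid (t : GTerm) : Set Pos := {p | (t.index p).isSome}

/-- `vars(t)`: positions of variables. -/
def Vars (t : GTerm) : Set Pos := {p | ∃ i, t.index p = some (.var i)}

/-- `free(t)`: positions of free variables. -/
def Free (t : GTerm) : Set Pos :=
  {p | ∃ i, t.index p = some (.var i) ∧ lamDepth p ≤ i}

/-- A term is closed if it has no free variables. -/
def Closed (t : GTerm) : Prop := Free t = ∅

/-- `p` is locally closed in `t`: every free variable of `t[p]` is also free in `t`. -/
def LocallyClosed (t : GTerm) (p : Pos) : Prop :=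
  p ∈ Valid t ∧ ∀ u, t.index p = some u → ∀ q ∈ Free u, p ++ q ∈ Free t

/-- Subtract `d0` from every free variable (`d` is the current binder depth). -/
def declift (d0 : ℕ) : GTerm → ℕ → GTerm
  | .var j, d => if d ≤ j then .var (j - d0) else .var j
  | .app a b, d => .app (declift d0 a d) (declift d0 b d)
  | .lam a, d => .lam (declift d0 a (d + 1))
  | .gvar a, _ => .gvar a

/-- The lift `⟨t⟩p`: equal to `t[p]` except every free variable of `t[p]` is
decremented by `|p|_λ`. -/
def liftAt (t : GTerm) (p : Pos) : Option GTerm :=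
  (t.index p).map (fun u => declift (lamDepth p) u 0)

/-- Transition labels: ↓, ↙, ↘ and ↑. -/
inductive Lab : Type
  | down | left | right | up
  deriving DecidableEq

def Lab.ofDir : Dir → Lab
  | .down => .down
  | .left => .left
  | .right => .right

/-- Transitions between term nodes. -/
inductive Trans : GTerm × Pos → Lab → GTerm × Pos → Prop
  | dir (t : GTerm) (p : Pos) (x : Dir) :
      (p ++ [x]) ∈ Valid t → Trans (t, p) (Lab.ofDir x) (t, p ++ [x])
  | up (t : GTerm) (q r : Pos) :
      t.index (q ++ Dir.down :: r) = some (.var (lamDepth r)) →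
      Trans (t, q ++ Dir.down :: r) Lab.up (t, q)

/-- `R` is a bisimulation. -/
def IsBisim (R : GTerm × Pos → GTerm × Pos → Prop) : Prop :=
  ∀ n₁ n₂, R n₁ n₂ → ∀ x : Lab,
    (∀ n₁', Trans n₁ x n₁' → ∃ n₂', Trans n₂ x n₂' ∧ R n₁' n₂') ∧
    (∀ n₂', Trans n₂ x n₂' → ∃ n₁', Trans n₁ x n₁' ∧ R n₁' n₂')

/-- Two nodes are bisimilar when some bisimulation relates them. -/
def Bisim (n₁ n₂ : GTerm × Pos) : Prop := ∃ R, IsBisim R ∧ R n₁ n₂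

/-- `(t, p)` is a term node: `t` is closed and `p ∈ valid(t)`. -/
def IsNode (t : GTerm) (p : Pos) : Prop := Closed t ∧ p ∈ Valid t

/-- A single fork between term nodes (let-abs rule or closed rule). -/
def SingleFork (n₁ n₂ : GTerm × Pos) : Prop :=
  (∃ t p q₁ q₂ r u,
      n₁ = (t, p ++ q₁ ++ r) ∧ n₂ = (t, p ++ q₂ ++ r) ∧
      IsNode t (p ++ q₁ ++ r) ∧ IsNode t (p ++ q₂ ++ r) ∧
      t.index p = some u ∧ LocallyClosed u q₁ ∧ liftAt u q₁ = liftAt u q₂) ∨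
  (∃ t₁ t₂ p₁ p₂ r u,
      n₁ = (t₁, p₁ ++ r) ∧ n₂ = (t₂, p₂ ++ r) ∧
      IsNode t₁ (p₁ ++ r) ∧ IsNode t₂ (p₂ ++ r) ∧
      t₁.index p₁ = some u ∧ Closed u ∧ t₂.index p₂ = some u)

/-- Fork equivalence: the transitive closure of single forks. -/
def ForkEquiv : GTerm × Pos → GTerm × Pos → Prop := Relation.TransGen SingleFork

/-- Shift free variables ≥ `c` up by `d`. -/
def shiftAux (c d : ℕ) : GTerm → GTerm
  | .var j => if j < c then .var j else .var (j + d)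
  | .app a b => .app (shiftAux c d a) (shiftAux c d b)
  | .lam a => .lam (shiftAux (c + 1) d a)
  | .gvar a => .gvar a

/-- Capture-avoiding substitution of free variable `i` by `u` (at current depth `d`). -/
def substAux (i : ℕ) (u : GTerm) : ℕ → GTerm → GTerm
  | d, .var j => if j = i + d then shiftAux 0 d u else .var j
  | d, .app a b => .app (substAux i u d a) (substAux i u d b)
  | d, .lam a => .lam (substAux i u (d + 1) a)
  | _, .gvar a => .gvar a

/-- `t[i := u]`: capture-avoiding substitution of variable `i` by `u` in `t`. -/
def subst (i : ℕ) (u : GTerm) (t : GTerm) : GTerm := substAux i u 0 t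

/-- Simultaneous capture-avoiding substitution of variable `i` by `σᵢ`
(at current depth `d`). -/
def msubstAux (σ : List GTerm) : ℕ → GTerm → GTerm
  | d, .var j =>
      if j < d then .var j else shiftAux 0 d (σ.getD (j - d) (.var (j - d)))
  | d, .app a b => .app (msubstAux σ d a) (msubstAux σ d b)
  | d, .lam a => .lam (msubstAux σ (d + 1) a)
  | _, .gvar a => .gvar a

/-- `tσ`: simultaneous substitution of each variable `i` by the `i`-th element of `σ`. -/
def msubst (σ : List GTerm) (t : GTerm) : GTerm := msubstAux σ 0 t

/-- Term size (the term summary `|t|`); global variables count as leaves. -/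
def gsize : GTerm → ℕ
  | .var _ => 1
  | .gvar _ => 1
  | .app a b => gsize a + gsize b + 1
  | .lam a => gsize a + 1

theorem gsize_shiftAux (c d : ℕ) (t : GTerm) : gsize (shiftAux c d t) = gsize t := by
  induction t generalizing c with
  | var j => simp only [shiftAux]; split <;> rfl
  | app a b iha ihb => simp [shiftAux, gsize, iha, ihb]
  | lam a ih => simp [shiftAux, gsize, ih]
  | gvar a => rfl

theorem gsize_substAux_gvar (i : ℕ) (w : GTerm) (d : ℕ) (t : GTerm) :
    gsize (substAux i (.gvar w) d t) = gsize t := by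
  induction t generalizing d with
  | var j => simp only [substAux]; split <;> rfl
  | app a b iha ihb => simp [substAux, gsize, iha, ihb]
  | lam a ih => simp [substAux, gsize, ih]
  | gvar a => rfl

theorem gsize_msubstAux (σ : List GTerm) (h : ∀ u ∈ σ, ∃ w, u = .gvar w)
    (d : ℕ) (t : GTerm) : gsize (msubstAux σ d t) = gsize t := by
  induction t generalizing d with
  | var j =>
    simp only [msubstAux]
    split
    · rfl
    · rw [gsize_shiftAux]
      rcases Nat.lt_or_ge (j - d) σ.length with hl | hl
      · rw [List.getD_eq_getElem _ _ hl]
        obtain ⟨w, hw⟩ := h _ (List.getElem_mem hl)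
        rw [hw]; rfl
      · rw [List.getD_eq_default _ _ hl]; rfl
  | app a b iha ihb => simp [msubstAux, gsize, iha, ihb]
  | lam a ih => simp [msubstAux, gsize, ih]
  | gvar a => rfl

theorem gsize_msubst (σ : List GTerm) (h : ∀ u ∈ σ, ∃ w, u = .gvar w)
    (t : GTerm) : gsize (msubst σ t) = gsize t :=
  gsize_msubstAux σ h 0 t

/-- The naive globalization procedure. -/
def globalizeNaive : GTerm → GTerm
  | .lam t => .lam (globalizeNaive (subst 0 (.gvar (.lam t)) t))
  | .app t u => .app (globalizeNaive t) (globalizeNaive u)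
  | .gvar t => .gvar t
  | .var i => .var i
termination_by t => gsize t
decreasing_by
  · simp only [subst, gsize_substAux_gvar, gsize]; omega
  · simp only [gsize]; omega
  · simp only [gsize]; omega

/-- The strongly connected component of a closed g-term: positions all of whose
nonempty prefixes index open terms. -/
def SCC (t : GTerm) : Set Pos :=
  {p | p ∈ Valid t ∧ ∀ p' u, p' ≠ [] → p' <+: p → t.index p' = some u → ¬ Closed u}

/-- `duplicates(t)`: strict subterms in the SCC of `t` whose term summary (size)
is not unique within the SCC. -/
def duplicates (t : GTerm) : Set GTerm :=
  {u | ∃ p q v, p ∈ SCC t ∧ q ∈ SCC t ∧ p ≠ [] ∧ q ≠ [] ∧ p ≠ q ∧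
      t.index p = some u ∧ t.index q = some v ∧ gsize u = gsize v}

open Classical in
mutual
/-- Efficient globalization. -/
noncomputable def globalize (r : GTerm) : GTerm :=
  globalizeScc r [] (by simp) r
termination_by (gsize r, 2)
decreasing_by
  apply Prod.Lex.right; omega

noncomputable def globalizeScc (r : GTerm) (σ : List GTerm)
    (h : ∀ u ∈ σ, ∃ w, u = GTerm.gvar w) : GTerm → GTerm
  | .lam t => .lam (globalizeStep r (.gvar (.app r t) :: σ)
      (by
        intro u hu
        rcases List.mem_cons.mp hu with h' | h'
        · exact ⟨_, h'⟩
        · exact h u h') t)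
  | .app t u => .app (globalizeStep r σ h t) (globalizeStep r σ h u)
  | .gvar t => .gvar t
  | .var i => msubst σ (.var i)
termination_by t => (gsize t, 1)
decreasing_by
  · apply Prod.Lex.left; simp only [gsize]; omega
  · apply Prod.Lex.left; simp only [gsize]; omega
  · apply Prod.Lex.left; simp only [gsize]; omega

noncomputable def globalizeStep (r : GTerm) (σ : List GTerm)
    (h : ∀ u ∈ σ, ∃ w, u = GTerm.gvar w) (t : GTerm) : GTerm :=
  if Closed t ∨ t ∈ duplicates r then globalize (msubst σ t)
  else globalizeScc r σ h t
termination_by (gsize t, 3)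
decreasing_by
  · rw [gsize_msubst σ h]; apply Prod.Lex.right; omega
  · apply Prod.Lex.right; omega
end

/-! ### Basic lemmas -/

theorem index_append (t : GTerm) (p q : Pos) :
    t.index (p ++ q) = (t.index p).bind (fun u => u.index q) := by
  induction p generalizing t with
  | nil => simp [GTerm.index]
  | cons x p ih =>
    cases t with
    | var i => cases x <;> simp [GTerm.index]
    | gvar w => cases x <;> simp [GTerm.index]
    | app a b => cases x <;> simp [GTerm.index, ih]
    | lam a => cases x <;> simp [GTerm.index, ih]

theorem index_prefix_isSome {t : GTerm} {p q : Pos} (h : q <+: p)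
    (hp : (t.index p).isSome) : (t.index q).isSome := by
  obtain ⟨r, rfl⟩ := h
  rw [index_append] at hp
  cases hq : t.index q with
  | none => rw [hq] at hp; simp at hp
  | some u => simp

theorem gsize_index_lt {t u : GTerm} {p : Pos} (hp : p ≠ [])
    (h : t.index p = some u) : gsize u < gsize t := by
  induction p generalizing t with
  | nil => exact absurd rfl hp
  | cons x p ih =>
    have key : ∀ t' : GTerm, t'.index p = some u → gsize t' < gsize t →
        gsize u < gsize t := by
      intro t' hidx hlt
      rcases eq_or_ne p [] with rfl | hne
      · simp [GTerm.index] at hidx; exact hidx ▸ hlt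
      · exact lt_trans (ih hne hidx) hlt
    cases t with
    | var i => cases x <;> simp [GTerm.index] at h
    | gvar w => cases x <;> simp [GTerm.index] at h
    | app a b =>
      cases x with
      | down => simp [GTerm.index] at h
      | left => exact key a h (by simp only [gsize]; omega)
      | right => exact key b h (by simp only [gsize]; omega)
    | lam a =>
      cases x with
      | down => exact key a h (by simp only [gsize]; omega)
      | left => simp [GTerm.index] at h
      | right => simp [GTerm.index] at h

theorem isPure_index {t u : GTerm} {p : Pos} (ht : t.IsPure)
    (h : t.index p = some u) : u.IsPure := by
  induction p generalizing t with
  | nil => simp [GTerm.index] at h; exact h ▸ ht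
  | cons x p ih =>
    cases t with
    | var i => cases x <;> simp [GTerm.index] at h
    | gvar w => cases x <;> simp [GTerm.index] at h
    | app a b =>
      cases x with
      | down => simp [GTerm.index] at h
      | left => exact ih (t := a) ht.1 h
      | right => exact ih (t := b) ht.2 h
    | lam a =>
      cases x with
      | down => exact ih (t := a) ht h
      | left => simp [GTerm.index] at h
      | right => simp [GTerm.index] at h



/-! ### Free-variable bounds -/

def FVlt : GTerm → ℕ → Prop
  | .var j, k => j < k
  | .app a b, k => FVlt a k ∧ FVlt b k
  | .lam a, k => FVlt a (k + 1)
  | .gvar _, _ => True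

theorem lamDepth_nil : lamDepth ([] : Pos) = 0 := rfl
theorem lamDepth_cons (x : Dir) (p : Pos) :
    lamDepth (x :: p) = lamDepth p + (if x = Dir.down then 1 else 0) := by
  simp [lamDepth, List.count_cons]
theorem lamDepth_append (p q : Pos) : lamDepth (p ++ q) = lamDepth p + lamDepth q := by
  simp [lamDepth, List.count_append]

theorem FVlt_index {t u : GTerm} {k : ℕ} {p : Pos} (ht : FVlt t k)
    (h : t.index p = some u) : FVlt u (k + lamDepth p) := by
  induction p generalizing t k with
  | nil => simp [GTerm.index] at h; subst h; simpa [lamDepth] using ht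
  | cons x p ih =>
    cases t with
    | var i => cases x <;> simp [GTerm.index] at h
    | gvar w => cases x <;> simp [GTerm.index] at h
    | app a b =>
      cases x with
      | down => simp [GTerm.index] at h
      | left => simpa [lamDepth_cons] using ih (t := a) ht.1 h
      | right => simpa [lamDepth_cons] using ih (t := b) ht.2 h
    | lam a =>
      cases x with
      | down =>
        have := ih (t := a) (k := k + 1) ht h
        simpa [lamDepth_cons, Nat.add_assoc, Nat.add_comm 1] using this
      | left => simp [GTerm.index] at h
      | right => simp [GTerm.index] at h

theorem not_FVlt {t : GTerm} {k : ℕ} (h : ¬ FVlt t k) :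
    ∃ p i, t.index p = some (.var i) ∧ k + lamDepth p ≤ i := by
  induction t generalizing k with
  | var j => exact ⟨[], j, rfl, by simpa [lamDepth] using Nat.le_of_not_lt h⟩
  | gvar w => exact absurd trivial h
  | app a b iha ihb =>
    by_cases ha : FVlt a k
    · have hb : ¬ FVlt b k := fun hb => h ⟨ha, hb⟩
      obtain ⟨p, i, hp, hi⟩ := ihb hb
      exact ⟨Dir.right :: p, i, hp, by simpa [lamDepth_cons] using hi⟩
    · obtain ⟨p, i, hp, hi⟩ := iha ha
      exact ⟨Dir.left :: p, i, hp, by simpa [lamDepth_cons] using hi⟩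
  | lam a iha =>
    obtain ⟨p, i, hp, hi⟩ := iha (k := k + 1) h
    exact ⟨Dir.down :: p, i, hp, by simp [lamDepth_cons]; omega⟩

theorem closed_iff_FVlt {t : GTerm} : Closed t ↔ FVlt t 0 := by
  constructor
  · intro hc
    by_contra h
    obtain ⟨p, i, hp, hi⟩ := not_FVlt h
    have : p ∈ Free t := ⟨i, hp, by simpa using hi⟩
    rw [hc] at this; exact this
  · intro h
    ext p; simp only [Set.mem_empty_iff_false, iff_false, Free, Set.mem_setOf_eq]
    rintro ⟨i, hp, hi⟩
    have := FVlt_index h hp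
    simp [FVlt] at this; omega

theorem closed_var_lt {t : GTerm} {p : Pos} {i : ℕ} (ht : Closed t)
    (h : t.index p = some (.var i)) : i < lamDepth p := by
  have := FVlt_index (closed_iff_FVlt.mp ht) h
  simpa [FVlt] using this

/-! ### Substitution lemmas -/

def allgvar (σ : List GTerm) : Prop := ∀ g ∈ σ, ∃ w, g = GTerm.gvar w

theorem msubstAux_id {σ : List GTerm} {t : GTerm} {e : ℕ} (h : FVlt t e) :
    msubstAux σ e t = t := by
  induction t generalizing e with
  | var j => exact if_pos h
  | gvar w => rfl
  | app a b iha ihb => simp [msubstAux, iha h.1, ihb h.2]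
  | lam a iha => simp [msubstAux, iha h]

theorem getD_gvar {σ : List GTerm} (hσ : allgvar σ) {k : ℕ} (hk : k < σ.length) :
    ∃ w, σ.getD k (GTerm.var 0) = GTerm.gvar w ∧ ∀ d, σ.getD k d = GTerm.gvar w := by
  obtain ⟨w, hw⟩ := hσ _ (List.getElem_mem hk)
  exact ⟨w, by simp [List.getD, List.getElem?_eq_getElem hk, hw], fun d => by
    simp [List.getD, List.getElem?_eq_getElem hk, hw]⟩

theorem FVlt_msubstAux {σ : List GTerm} {t : GTerm} {e : ℕ} (hσ : allgvar σ)
    (h : FVlt t (e + σ.length)) : FVlt (msubstAux σ e t) e := by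
  induction t generalizing e with
  | var j =>
    simp only [msubstAux]
    split
    · exact ‹j < e›
    · obtain ⟨w, -, hw⟩ := getD_gvar hσ (k := j - e) (by simp [FVlt] at h; omega)
      rw [hw]; exact trivial
  | gvar w => exact trivial
  | app a b iha ihb => exact ⟨iha h.1, ihb h.2⟩
  | lam a iha => exact iha (by rw [Nat.add_right_comm]; exact h)

theorem msubst_var {σ : List GTerm} {i : ℕ} (hσ : allgvar σ) (hi : i < σ.length) :
    msubst σ (.var i) = σ.getD i (.var 0) := by
  obtain ⟨w, hw, hwD⟩ := getD_gvar hσ hi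
  simp only [msubst, msubstAux, Nat.not_lt_zero, if_false, Nat.sub_zero, hwD]
  rfl

theorem msubst_var_leaf (σ : List GTerm) (i : ℕ) (hσ : allgvar σ) :
    (∃ j, msubst σ (.var i) = .var j) ∨ ∃ w, msubst σ (.var i) = .gvar w := by
  by_cases hi : i < σ.length
  · obtain ⟨w, hw, -⟩ := getD_gvar hσ hi
    exact Or.inr ⟨w, by rw [msubst_var hσ hi, hw]⟩
  · left
    refine ⟨i, ?_⟩
    simp only [msubst, msubstAux, Nat.not_lt_zero, if_false, Nat.sub_zero]
    rw [List.getD_eq_default _ _ (Nat.le_of_not_lt hi)]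
    simp [shiftAux]



/-! ### The substitution relation -/

inductive Rel (Λ : List GTerm) (m : ℕ) : ℕ → GTerm → GTerm → Prop
  | keep {e j : ℕ} : j < e + m → Rel Λ m e (.var j) (.var j)
  | glob {e j : ℕ} : e + m ≤ j → (∃ w, Λ.getD (j - e) (.var 0) = .gvar w) →
      Rel Λ m e (.var j) (Λ.getD (j - e) (.var 0))
  | app {e : ℕ} {a b a' b' : GTerm} :
      Rel Λ m e a a' → Rel Λ m e b b' → Rel Λ m e (.app a b) (.app a' b')
  | lam {e : ℕ} {a a' : GTerm} : Rel Λ m (e + 1) a a' → Rel Λ m e (.lam a) (.lam a')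

theorem rel_refl {Λ : List GTerm} {m e : ℕ} {w : GTerm} (hp : w.IsPure) (h : FVlt w e) :
    Rel Λ m e w w := by
  induction w generalizing e with
  | var j => exact Rel.keep (by have : j < e := h; omega)
  | gvar g => exact absurd hp id
  | app a b iha ihb => exact Rel.app (iha hp.1 h.1) (ihb hp.2 h.2)
  | lam a iha => exact Rel.lam (iha hp h)

theorem rel_shift {Λ : List GTerm} {L : GTerm} {m e : ℕ} {w u : GTerm}
    (h : Rel Λ m (e + 1) w u) : Rel (L :: Λ) (m + 1) e w u := by
  induction w generalizing e u with
  | var j =>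
    cases h with
    | keep hj => exact Rel.keep (by omega)
    | glob hj hg =>
      have hje : j - e = (j - (e + 1)) + 1 := by omega
      have : (L :: Λ).getD (j - e) (.var 0) = Λ.getD (j - (e + 1)) (.var 0) := by
        rw [hje]; rfl
      rw [← this] at hg ⊢
      exact Rel.glob (by omega) hg
  | gvar g => cases h
  | app a b iha ihb =>
    cases h with
    | app ha hb => exact Rel.app (iha ha) (ihb hb)
  | lam a iha =>
    cases h with
    | lam ha => exact Rel.lam (iha ha)

theorem take_getD {Λ : List GTerm} {m k : ℕ} (hk : k < m) (hm : m ≤ Λ.length)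
    (d : GTerm) : (Λ.take m).getD k d = Λ.getD k d := by
  have h1 : k < (Λ.take m).length := by simp; omega
  have h2 : k < Λ.length := by omega
  rw [List.getD_eq_getElem _ _ h1, List.getD_eq_getElem _ _ h2, List.getElem_take]

theorem rel_restart {Λ : List GTerm} {m e : ℕ} {w u : GTerm}
    (hσ : allgvar (Λ.take m)) (hm : m ≤ Λ.length)
    (h : Rel Λ m e w u) : Rel Λ 0 e w (msubstAux (Λ.take m) e u) := by
  induction w generalizing e u with
  | var j =>
    cases h with
    | keep hj =>
      by_cases hje : j < e
      · rw [msubstAux, if_pos hje]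
        exact Rel.keep (by omega)
      · rw [msubstAux, if_neg hje]
        have hlen : j - e < (Λ.take m).length := by simp; omega
        obtain ⟨w', hw', hwD⟩ := getD_gvar hσ hlen
        rw [hwD]
        have : Λ.getD (j - e) (.var 0) = GTerm.gvar w' := by
          rw [← take_getD (by omega : j - e < m) hm]; exact hw'
        have goal : Rel Λ 0 e (.var j) (Λ.getD (j - e) (.var 0)) :=
          Rel.glob (by omega) ⟨w', this⟩
        rw [this] at goal
        exact goal
    | glob hj hg =>
      obtain ⟨w', hw'⟩ := hg
      rw [hw', msubstAux]
      rw [← hw']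
      exact Rel.glob (by omega) ⟨w', hw'⟩
  | gvar g => cases h
  | app a b iha ihb =>
    cases h with
    | app ha hb => exact Rel.app (iha ha) (ihb hb)
  | lam a iha =>
    cases h with
    | lam ha => exact Rel.lam (iha ha)



/-! ### Binder bodies and the abstract state machine -/

def binders : GTerm → Pos → List GTerm
  | _, [] => []
  | .lam v, .down :: p => binders v p ++ [v]
  | .app a _, .left :: p => binders a p
  | .app _ b, .right :: p => binders b p
  | _, _ => []

theorem binders_append {t u : GTerm} {p : Pos} (h : t.index p = some u) (q : Pos) :
    binders t (p ++ q) = binders u q ++ binders t p := by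
  induction p generalizing t with
  | nil => simp [GTerm.index] at h; subst h; simp [binders]
  | cons x p ih =>
    cases t with
    | var i => cases x <;> simp [GTerm.index] at h
    | gvar w => cases x <;> simp [GTerm.index] at h
    | app a b =>
      cases x with
      | down => simp [GTerm.index] at h
      | left => simpa [binders] using ih (t := a) h
      | right => simpa [binders] using ih (t := b) h
    | lam a =>
      cases x with
      | down => simp [binders, ih (t := a) h]
      | left => simp [GTerm.index] at h
      | right => simp [GTerm.index] at h

theorem binders_length {t : GTerm} {p : Pos} (h : (t.index p).isSome) :
    (binders t p).length = lamDepth p := by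
  induction p generalizing t with
  | nil => simp [binders, lamDepth]
  | cons x p ih =>
    cases t with
    | var i => cases x <;> simp [GTerm.index] at h
    | gvar w => cases x <;> simp [GTerm.index] at h
    | app a b =>
      cases x with
      | down => simp [GTerm.index] at h
      | left => simpa [binders, lamDepth_cons] using ih (t := a) h
      | right => simpa [binders, lamDepth_cons] using ih (t := b) h
    | lam a =>
      cases x with
      | down => simp [binders, lamDepth_cons, ih (t := a) h]
      | left => simp [GTerm.index] at h
      | right => simp [GTerm.index] at h

def lab (r u : GTerm) : GTerm := .gvar (.app r u)

def σAt (r : GTerm) (p : Pos) : List GTerm := (binders r p).map (lab r)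

abbrev State := GTerm × List GTerm × GTerm

open Classical in
noncomputable def resolve : State → State := fun s =>
  if Closed s.2.2 ∨ s.2.2 ∈ duplicates s.1 then
    (msubst s.2.1 s.2.2, [], msubst s.2.1 s.2.2) else s

open Classical in
noncomputable def Gfun : State → GTerm
  | (r, σ, u) => if h : allgvar σ then globalizeScc r σ h u else .var 0

noncomputable def stL : State → List GTerm → Pos → Option (State × List GTerm)
  | s, _Λ, [] => some (s, _Λ)
  | (r, σ, .lam u), Λ, .down :: p =>
      stL (resolve (r, lab r u :: σ, u)) (lab r u :: Λ) p
  | (r, σ, .app a _), Λ, .left :: p => stL (resolve (r, σ, a)) Λ p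
  | (r, σ, .app _ b), Λ, .right :: p => stL (resolve (r, σ, b)) Λ p
  | _, _, _ => none

theorem allgvar_nil : allgvar [] := by intro g hg; simp at hg

theorem allgvar_resolve {s : State} (h : allgvar s.2.1) : allgvar (resolve s).2.1 := by
  rw [resolve]
  split
  · exact allgvar_nil
  · exact h

theorem allgvar_cons {σ : List GTerm} {r u : GTerm} (h : allgvar σ) :
    allgvar (lab r u :: σ) := by
  intro g hg
  rcases List.mem_cons.mp hg with h' | h'
  · exact ⟨_, h'⟩
  · exact h g h'

open Classical in
theorem Gfun_eq (r : GTerm) (σ : List GTerm) (u : GTerm) :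
    Gfun (r, σ, u) = if h : allgvar σ then globalizeScc r σ h u else .var 0 := rfl

theorem step_eq_Gfun_resolve (r : GTerm) (σ : List GTerm) (h : ∀ u ∈ σ, ∃ w, u = GTerm.gvar w)
    (u : GTerm) : globalizeStep r σ h u = Gfun (resolve (r, σ, u)) := by
  rw [globalizeStep, resolve]
  split
  · show _ = Gfun (msubst σ u, [], msubst σ u)
    rw [Gfun_eq, dif_pos allgvar_nil, globalize]
  · rw [Gfun_eq, dif_pos (show allgvar σ from h)]

theorem Gfun_lam {r : GTerm} {σ : List GTerm} {u : GTerm} (hσ : allgvar σ) :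
    Gfun (r, σ, .lam u) = .lam (Gfun (resolve (r, lab r u :: σ, u))) := by
  rw [Gfun_eq, dif_pos hσ]
  have hσ' : ∀ u ∈ σ, ∃ w, u = GTerm.gvar w := hσ
  change globalizeScc r σ hσ' _ = _
  rw [globalizeScc, step_eq_Gfun_resolve]
  rfl

theorem Gfun_app {r : GTerm} {σ : List GTerm} {a b : GTerm} (hσ : allgvar σ) :
    Gfun (r, σ, .app a b) =
      .app (Gfun (resolve (r, σ, a))) (Gfun (resolve (r, σ, b))) := by
  rw [Gfun_eq, dif_pos hσ]
  have hσ' : ∀ u ∈ σ, ∃ w, u = GTerm.gvar w := hσ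
  change globalizeScc r σ hσ' _ = _
  rw [globalizeScc, step_eq_Gfun_resolve, step_eq_Gfun_resolve]

theorem Gfun_var {r : GTerm} {σ : List GTerm} {i : ℕ} (hσ : allgvar σ) :
    Gfun (r, σ, .var i) = msubst σ (.var i) := by
  rw [Gfun_eq, dif_pos hσ]
  have hσ' : ∀ u ∈ σ, ∃ w, u = GTerm.gvar w := hσ
  change globalizeScc r σ hσ' _ = _
  rw [globalizeScc]

theorem Gfun_gvar {r : GTerm} {σ : List GTerm} {g : GTerm} (hσ : allgvar σ) :
    Gfun (r, σ, .gvar g) = .gvar g := by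
  rw [Gfun_eq, dif_pos hσ]
  have hσ' : ∀ u ∈ σ, ∃ w, u = GTerm.gvar w := hσ
  change globalizeScc r σ hσ' _ = _
  rw [globalizeScc]

theorem index_Gfun (p : Pos) : ∀ (s : State) (Λ : List GTerm), allgvar s.2.1 →
    (Gfun s).index p = (stL s Λ p).map (fun x => Gfun x.1) := by
  induction p with
  | nil => intro s Λ _; simp [stL, GTerm.index]
  | cons x p ih =>
    rintro ⟨r, σ, u⟩ Λ hσ
    cases u with
    | var i =>
      rw [Gfun_var hσ]
      rcases msubst_var_leaf σ i hσ with ⟨j, hj⟩ | ⟨w, hw⟩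
      · rw [hj]; cases x <;> simp [stL, GTerm.index]
      · rw [hw]; cases x <;> simp [stL, GTerm.index]
    | gvar g => rw [Gfun_gvar hσ]; cases x <;> simp [stL, GTerm.index]
    | lam a =>
      rw [Gfun_lam hσ]
      cases x with
      | down =>
        show (Gfun (resolve (r, lab r a :: σ, a))).index p = _
        rw [ih _ (lab r a :: Λ) (allgvar_resolve (allgvar_cons hσ))]
        rfl
      | left => simp [stL, GTerm.index]
      | right => simp [stL, GTerm.index]
    | app a b =>
      rw [Gfun_app hσ]
      cases x with
      | down => simp [stL, GTerm.index]
      | left =>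
        show (Gfun (resolve (r, σ, a))).index p = _
        rw [ih (resolve (r, σ, a)) Λ (allgvar_resolve (s := (r, σ, a)) hσ)]
        rfl
      | right =>
        show (Gfun (resolve (r, σ, b))).index p = _
        rw [ih (resolve (r, σ, b)) Λ (allgvar_resolve (s := (r, σ, b)) hσ)]
        rfl

theorem stL_append (p q : Pos) : ∀ (s : State) (Λ : List GTerm),
    stL s Λ (p ++ q) = (stL s Λ p).bind (fun x => stL x.1 x.2 q) := by
  induction p with
  | nil => intro s Λ; simp [stL]
  | cons x p ih =>
    rintro ⟨r, σ, u⟩ Λ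
    cases u with
    | var i => cases x <;> simp [stL]
    | gvar g => cases x <;> simp [stL]
    | lam a => cases x <;> simp [stL, ih]
    | app a b => cases x <;> simp [stL, ih]

theorem stL_lambdas (p : Pos) : ∀ (s s' : State) (Λ Λ' : List GTerm),
    stL s Λ p = some (s', Λ') → ∃ Δ, Λ' = Δ ++ Λ ∧ Δ.length = lamDepth p := by
  induction p with
  | nil =>
    intro s s' Λ Λ' h
    simp [stL] at h
    exact ⟨[], by simp [h.2.symm, lamDepth]⟩
  | cons x p ih =>
    rintro ⟨r, σ, u⟩ s' Λ Λ' h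
    cases u with
    | var i => cases x <;> simp [stL] at h
    | gvar g => cases x <;> simp [stL] at h
    | lam a =>
      cases x with
      | down =>
        obtain ⟨Δ, hΔ, hlen⟩ := ih _ _ _ _ h
        exact ⟨Δ ++ [lab r a], by simp [hΔ], by simp [hlen, lamDepth_cons]⟩
      | left => simp [stL] at h
      | right => simp [stL] at h
    | app a b =>
      cases x with
      | down => simp [stL] at h
      | left =>
        obtain ⟨Δ, hΔ, hlen⟩ := ih _ _ _ _ h
        exact ⟨Δ, hΔ, by simp [hlen, lamDepth_cons]⟩
      | right =>
        obtain ⟨Δ, hΔ, hlen⟩ := ih _ _ _ _ h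
        exact ⟨Δ, hΔ, by simp [hlen, lamDepth_cons]⟩



/-! ### The state invariant -/

def Inv : State → Prop := fun s =>
  Closed s.1 ∧ ∃ p', p' ∈ SCC s.1 ∧ s.1.index p' = some s.2.2 ∧ s.2.1 = σAt s.1 p' ∧
    (p' ≠ [] → ¬ Closed s.2.2 ∧ s.2.2 ∉ duplicates s.1)

theorem scc_nil (r : GTerm) : [] ∈ SCC r := by
  refine ⟨by simp [Valid, GTerm.index], ?_⟩
  intro p' u hne hpre
  exact absurd (List.prefix_nil.mp hpre) hne

theorem σAt_nil (r : GTerm) : σAt r [] = [] := by cases r <;> simp [σAt, binders]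

theorem σAt_length {r : GTerm} {p : Pos} (h : (r.index p).isSome) :
    (σAt r p).length = lamDepth p := by simp [σAt, binders_length h]

theorem allgvar_σAt (r : GTerm) (p : Pos) : allgvar (σAt r p) := by
  intro g hg
  simp only [σAt, List.mem_map] at hg
  obtain ⟨v, -, rfl⟩ := hg
  exact ⟨_, rfl⟩

theorem σAt_snoc_down {r v : GTerm} {p : Pos} (h : r.index p = some (.lam v)) :
    σAt r (p ++ [Dir.down]) = lab r v :: σAt r p := by
  simp [σAt, binders_append h [Dir.down], binders]

theorem σAt_snoc_left {r a b : GTerm} {p : Pos} (h : r.index p = some (.app a b)) :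
    σAt r (p ++ [Dir.left]) = σAt r p := by
  simp [σAt, binders_append h [Dir.left], binders]

theorem σAt_snoc_right {r a b : GTerm} {p : Pos} (h : r.index p = some (.app a b)) :
    σAt r (p ++ [Dir.right]) = σAt r p := by
  simp [σAt, binders_append h [Dir.right], binders]

theorem inv_sigma_unique {r u : GTerm} {σ₁ σ₂ : List GTerm}
    (h₁ : Inv (r, σ₁, u)) (h₂ : Inv (r, σ₂, u)) : σ₁ = σ₂ := by
  obtain ⟨hr, p₁, hscc₁, hidx₁, hσ₁, hcl₁⟩ := h₁
  obtain ⟨-, p₂, hscc₂, hidx₂, hσ₂, hcl₂⟩ := h₂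
  simp only at hr hscc₁ hidx₁ hσ₁ hcl₁ hscc₂ hidx₂ hσ₂ hcl₂
  rcases eq_or_ne p₁ p₂ with rfl | hne
  · rw [hσ₁, hσ₂]
  rcases eq_or_ne p₁ [] with rfl | hne₁
  · simp [GTerm.index] at hidx₁
    have := gsize_index_lt (Ne.symm hne) hidx₂
    rw [hidx₁] at this
    omega
  rcases eq_or_ne p₂ [] with rfl | hne₂
  · simp [GTerm.index] at hidx₂
    have := gsize_index_lt hne₁ hidx₁
    rw [hidx₂] at this
    omega
  exact absurd ⟨p₁, p₂, u, hscc₁, hscc₂, hne₁, hne₂, hne, hidx₁, hidx₂, rfl⟩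
    (hcl₁ hne₁).2

/-! ### The main invariant of the computation -/

structure Pre (w : GTerm) (s : State) (Λ : List GTerm) : Prop where
  inv : Inv s
  allg : allgvar s.2.1
  take : s.2.1 = Λ.take s.2.1.length
  mle : s.2.1.length ≤ Λ.length
  rel : Rel Λ s.2.1.length 0 w s.2.2

open Classical in
theorem resolve_eq (r u : GTerm) (σ : List GTerm) :
    resolve (r, σ, u) = if Closed u ∨ u ∈ duplicates r then
      (msubst σ u, [], msubst σ u) else (r, σ, u) := rfl

theorem mid_pre {w r u : GTerm} {σ Λ : List GTerm} {p'' : Pos}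
    (hr : Closed r)
    (hscc : ∀ p₀ u₀, p₀ ≠ [] → p₀ <+: p'' → p₀ ≠ p'' → r.index p₀ = some u₀ → ¬ Closed u₀)
    (hidx : r.index p'' = some u)
    (hσ : σ = σAt r p'')
    (htake : σ = Λ.take σ.length) (hmle : σ.length ≤ Λ.length)
    (hrel : Rel Λ σ.length 0 w u) :
    Pre w (resolve (r, σ, u)) Λ := by
  have hσlen : σ.length = lamDepth p'' := by
    rw [hσ]; exact σAt_length (by rw [hidx]; rfl)
  have hσg : allgvar σ := hσ ▸ allgvar_σAt r p''
  rw [resolve_eq]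
  by_cases hc : Closed u ∨ u ∈ duplicates r
  · rw [if_pos hc]
    have hfv : FVlt u σ.length := by
      rw [hσlen]
      simpa using FVlt_index (closed_iff_FVlt.mp hr) hidx
    have hclosedW : Closed (msubst σ u) :=
      closed_iff_FVlt.mpr (FVlt_msubstAux hσg (by simpa using hfv))
    refine ⟨⟨hclosedW, [], scc_nil _, by simp [GTerm.index], (σAt_nil _).symm,
      fun h => absurd rfl h⟩, allgvar_nil, by simp, by simp, ?_⟩
    have := rel_restart (htake ▸ hσg) hmle hrel
    rw [← htake] at this
    exact this
  · rw [if_neg hc]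
    push_neg at hc
    refine ⟨⟨hr, p'', ⟨show (r.index p'').isSome by rw [hidx]; rfl, ?_⟩, hidx, hσ,
      fun _ => hc⟩, hσg, htake, hmle, hrel⟩
    intro p₀ u₀ hne hpre hidx₀
    rcases eq_or_ne p₀ p'' with rfl | hne'
    · rw [hidx₀] at hidx
      cases hidx
      exact hc.1
    · exact hscc p₀ u₀ hne hpre hne' hidx₀

theorem scc_extend {r u : GTerm} {p'' : Pos} (hscc : p'' ∈ SCC r) (x : Dir)
    (hidx : r.index (p'' ++ [x]) = some u) :
    ∀ p₀ u₀, p₀ ≠ [] → p₀ <+: (p'' ++ [x]) → p₀ ≠ p'' ++ [x] →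
      r.index p₀ = some u₀ → ¬ Closed u₀ := by
  intro p₀ u₀ hne hpre hne' hidx₀
  have hpre' : p₀ <+: p'' := by
    rcases List.prefix_concat_iff.mp hpre with h | h
    · exact absurd h hne'
    · exact h
  exact hscc.2 p₀ u₀ hne hpre' hidx₀

/-- The grand induction: along any valid position of a pure closed term, the
state machine is defined and the invariant holds. -/
theorem aux (p : Pos) : ∀ (w : GTerm) (s : State) (Λ : List GTerm), Pre w s Λ →
    ∀ w', w.index p = some w' → ∃ s' Λ', stL s Λ p = some (s', Λ') ∧ Pre w' s' Λ' := by
  induction p with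
  | nil =>
    intro w s Λ hpre w' hw'
    simp [GTerm.index] at hw'
    exact ⟨s, Λ, by simp [stL], hw' ▸ hpre⟩
  | cons x p ih =>
    rintro w ⟨r, σ, u⟩ Λ hpre w' hw'
    obtain ⟨hr, p'', hscc'', hidx'', hσ'', hcl''⟩ := hpre.inv
    have htake := hpre.take
    have hmle := hpre.mle
    have hrel := hpre.rel
    simp only at htake hmle hrel hidx'' hσ'' hcl''
    cases w with
    | var i => cases x <;> simp [GTerm.index] at hw'
    | gvar g => cases x <;> simp [GTerm.index] at hw'
    | lam a =>
      cases x with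
      | left => simp [GTerm.index] at hw'
      | right => simp [GTerm.index] at hw'
      | down =>
        cases hrel with
        | lam ha =>
          rename_i a'
          have hidx' : r.index (p'' ++ [Dir.down]) = some a' := by
            rw [index_append, hidx'']; simp [GTerm.index]
          have hmid : Pre a (resolve (r, lab r a' :: σ, a')) (lab r a' :: Λ) := by
            refine mid_pre hr (scc_extend hscc'' _ hidx') hidx'
              (by rw [σAt_snoc_down hidx'', hσ''])
              (by simpa using htake) (by simpa using hmle) ?_
            simpa using rel_shift ha
          obtain ⟨s', Λ', hst, hpre'⟩ := ih a _ _ hmid w' hw'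
          exact ⟨s', Λ', by simpa [stL] using hst, hpre'⟩
    | app a b =>
      cases hrel with
      | app ha hb =>
        rename_i a' b'
        cases x with
        | down => simp [GTerm.index] at hw'
        | left =>
          have hidx' : r.index (p'' ++ [Dir.left]) = some a' := by
            rw [index_append, hidx'']; simp [GTerm.index]
          have hmid : Pre a (resolve (r, σ, a')) Λ :=
            mid_pre hr (scc_extend hscc'' _ hidx') hidx'
              (by rw [σAt_snoc_left hidx'', hσ'']) htake hmle ha
          obtain ⟨s', Λ', hst, hpre'⟩ := ih a _ _ hmid w' hw'
          exact ⟨s', Λ', by simpa [stL] using hst, hpre'⟩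
        | right =>
          have hidx' : r.index (p'' ++ [Dir.right]) = some b' := by
            rw [index_append, hidx'']; simp [GTerm.index]
          have hmid : Pre b (resolve (r, σ, b')) Λ :=
            mid_pre hr (scc_extend hscc'' _ hidx') hidx'
              (by rw [σAt_snoc_right hidx'', hσ'']) htake hmle hb
          obtain ⟨s', Λ', hst, hpre'⟩ := ih b _ _ hmid w' hw'
          exact ⟨s', Λ', by simpa [stL] using hst, hpre'⟩

theorem pre_init {t : GTerm} (hc : Closed t) (hp : t.IsPure) : Pre t (t, [], t) [] :=
  ⟨⟨hc, [], scc_nil _, by simp [GTerm.index], (σAt_nil _).symm, fun h => absurd rfl h⟩,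
    allgvar_nil, rfl, Nat.le_refl _, rel_refl hp (closed_iff_FVlt.mp hc)⟩

theorem globalize_eq_Gfun (t : GTerm) : globalize t = Gfun (t, [], t) := by
  rw [Gfun_eq, dif_pos allgvar_nil, globalize]

theorem index_globalize (t : GTerm) (p : Pos) :
    (globalize t).index p = (stL (t, [], t) [] p).map (fun x => Gfun x.1) := by
  rw [globalize_eq_Gfun]
  exact index_Gfun p _ [] allgvar_nil



/-! ### The key lemma about variable positions -/

theorem exists_split {p : Pos} {i : ℕ} (hi : i < lamDepth p) :
    ∃ q b, p = q ++ Dir.down :: b ∧ lamDepth b = i := by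
  induction p with
  | nil => simp [lamDepth] at hi
  | cons x p ih =>
    cases x with
    | down =>
      rcases Nat.lt_or_ge i (lamDepth p) with h | h
      · obtain ⟨q, b, rfl, hb⟩ := ih h
        exact ⟨Dir.down :: q, b, rfl, hb⟩
      · have : i = lamDepth p := by
          rw [lamDepth_cons] at hi; simp at hi; omega
        exact ⟨[], p, rfl, this.symm⟩
    | left =>
      rw [lamDepth_cons] at hi; simp at hi
      obtain ⟨q, b, rfl, hb⟩ := ih hi
      exact ⟨Dir.left :: q, b, rfl, hb⟩
    | right =>
      rw [lamDepth_cons] at hi; simp at hi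
      obtain ⟨q, b, rfl, hb⟩ := ih hi
      exact ⟨Dir.right :: q, b, rfl, hb⟩

theorem key {t : GTerm} (hc : Closed t) (hp : t.IsPure) {q b : Pos} {i : ℕ}
    (hv : t.index (q ++ Dir.down :: b) = some (.var i)) (hb : lamDepth b = i) :
    ∃ (rb v : GTerm) (σb Λq : List GTerm),
      Inv (rb, σb, .lam v) ∧
      (globalize t).index (q ++ Dir.down :: b) = some (lab rb v) ∧
      (globalize t).index q = some (Gfun (rb, σb, .lam v)) := by
  -- the subterm at q is a lambda
  have hq : ∃ wq, t.index q = some wq := by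
    have := index_append t q (Dir.down :: b)
    rw [hv] at this
    cases h : t.index q with
    | none => rw [h] at this; simp at this
    | some wq => exact ⟨wq, rfl⟩
  obtain ⟨wq, hwq⟩ := hq
  have hwqb : wq.index (Dir.down :: b) = some (.var i) := by
    have := index_append t q (Dir.down :: b)
    rw [hv, hwq] at this
    exact this.symm
  obtain ⟨w1, rfl⟩ : ∃ w1, wq = .lam w1 := by
    cases wq with
    | lam w1 => exact ⟨w1, rfl⟩
    | var j => simp [GTerm.index] at hwqb
    | gvar g => simp [GTerm.index] at hwqb
    | app a c => simp [GTerm.index] at hwqb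
  -- state at q
  obtain ⟨⟨rq, σq, uq⟩, Λq, hstq, hpreq⟩ := aux q _ _ [] (pre_init hc hp) _ hwq
  have hrelq := hpreq.rel
  simp only at hrelq
  obtain ⟨v, rfl, hrv⟩ : ∃ v, uq = .lam v ∧ Rel Λq σq.length 1 w1 v := by
    cases hrelq with
    | lam h => exact ⟨_, rfl, by simpa using h⟩
  -- state at the full position
  obtain ⟨⟨rp, σp, up⟩, Λp, hstp, hprep⟩ := aux _ _ _ [] (pre_init hc hp) _ hv
  -- decompose the path
  have hdec : stL (t, [], t) [] (q ++ Dir.down :: b) =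
      stL (resolve (rq, lab rq v :: σq, v)) (lab rq v :: Λq) b := by
    rw [stL_append, hstq]
    simp [stL]
  rw [hdec] at hstp
  obtain ⟨Δ, hΔ, hΔlen⟩ := stL_lambdas b _ _ _ _ hstp
  have hgetD : Λp.getD i (.var 0) = lab rq v := by
    rw [hΔ, ← hb, ← hΔlen]
    rw [List.getD_append_right _ _ _ _ (Nat.le_refl _)]
    simp
  -- compute the globalized term at the variable position
  have hidxp : (globalize t).index (q ++ Dir.down :: b) = some (Gfun (rp, σp, up)) := by
    rw [index_globalize, stL_append, hstq]
    show Option.map _ (stL (rq, σq, .lam v) Λq (Dir.down :: b)) = _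
    rw [show stL (rq, σq, GTerm.lam v) Λq (Dir.down :: b) =
        stL (resolve (rq, lab rq v :: σq, v)) (lab rq v :: Λq) b by simp [stL]]
    rw [hstp]
    rfl
  have hval : Gfun (rp, σp, up) = lab rq v := by
    have hrelp := hprep.rel
    have hallg := hprep.allg
    have htake := hprep.take
    have hmle := hprep.mle
    simp only at hrelp hallg htake hmle
    cases hrelp with
    | keep hik =>
      rw [Gfun_var hallg, msubst_var hallg (by omega)]
      rw [htake, take_getD (by omega) (by omega)]
      simpa using hgetD
    | glob hik hg =>
      have h0 : Λp.getD (i - 0) (.var 0) = lab rq v := by simpa using hgetD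
      rw [h0]
      exact Gfun_gvar hallg
  refine ⟨rq, v, σq, Λq, hpreq.inv, hval ▸ hidxp, ?_⟩
  rw [index_globalize, hstq]
  rfl



/-! ### Head shapes of globalized states -/

theorem Gfun_not_lam_of_var {r : GTerm} {σ : List GTerm} {i : ℕ} (hσ : allgvar σ)
    {X : GTerm} (h : Gfun (r, σ, .var i) = .lam X) : False := by
  rw [Gfun_var hσ] at h
  rcases msubst_var_leaf σ i hσ with ⟨j, hj⟩ | ⟨w, hw⟩
  · rw [hj] at h; cases h
  · rw [hw] at h; cases h

/-- If the globalized values at two related states are equal, the middle terms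
have matching head constructors. Here we extract the needed instances inline. -/
theorem rel_head_lam {Λ : List GTerm} {m : ℕ} {w u : GTerm} (h : Rel Λ m 0 w u)
    {a : GTerm} (hu : u = .lam a) : ∃ b, w = .lam b := by
  cases h <;> simp_all
theorem rel_head_app {Λ : List GTerm} {m : ℕ} {w u : GTerm} (h : Rel Λ m 0 w u)
    {a b : GTerm} (hu : u = .app a b) : ∃ c d, w = .app c d := by
  cases h <;> simp_all

/-! ### The bisimulation relation -/

def RB : GTerm × Pos → GTerm × Pos → Prop := fun n₁ n₂ =>
  n₁.1.IsPure ∧ n₂.1.IsPure ∧ IsNode n₁.1 n₁.2 ∧ IsNode n₂.1 n₂.2 ∧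
  (globalize n₁.1).index n₁.2 = (globalize n₂.1).index n₂.2

theorem RB_symm {n₁ n₂ : GTerm × Pos} (h : RB n₁ n₂) : RB n₂ n₁ :=
  ⟨h.2.1, h.1, h.2.2.2.1, h.2.2.1, h.2.2.2.2.symm⟩

theorem rb_forward {n₁ n₂ : GTerm × Pos} (h : RB n₁ n₂) (x : Lab) :
    ∀ n₁', Trans n₁ x n₁' → ∃ n₂', Trans n₂ x n₂' ∧ RB n₁' n₂' := by
  obtain ⟨t₁, p₁⟩ := n₁
  obtain ⟨t₂, p₂⟩ := n₂
  obtain ⟨hp₁, hp₂, hn₁, hn₂, hg⟩ := h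
  simp only at hp₁ hp₂ hn₁ hn₂ hg
  have hc₁ : Closed t₁ := hn₁.1
  have hc₂ : Closed t₂ := hn₂.1
  obtain ⟨w₂, hw₂⟩ : ∃ w₂, t₂.index p₂ = some w₂ :=
    Option.isSome_iff_exists.mp hn₂.2
  obtain ⟨⟨r₂, σ₂, u₂⟩, Λ₂, hst₂, hpre₂⟩ := aux p₂ _ _ [] (pre_init hc₂ hp₂) _ hw₂
  have hgi₂ : (globalize t₂).index p₂ = some (Gfun (r₂, σ₂, u₂)) := by
    rw [index_globalize, hst₂]; rfl
  intro n₁' htr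
  cases htr with
  | dir t p d hval =>
    obtain ⟨w', hw'⟩ : ∃ w', t₁.index (p₁ ++ [d]) = some w' :=
      Option.isSome_iff_exists.mp hval
    obtain ⟨w₁, hw₁⟩ : ∃ w₁, t₁.index p₁ = some w₁ :=
      Option.isSome_iff_exists.mp (index_prefix_isSome ⟨[d], rfl⟩ hval)
    obtain ⟨⟨r₁, σ₁, u₁⟩, Λ₁, hst₁, hpre₁⟩ := aux p₁ _ _ [] (pre_init hc₁ hp₁) _ hw₁
    have hgi₁ : (globalize t₁).index p₁ = some (Gfun (r₁, σ₁, u₁)) := by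
      rw [index_globalize, hst₁]; rfl
    have hGeq : Gfun (r₁, σ₁, u₁) = Gfun (r₂, σ₂, u₂) := by
      have := hg
      rw [hgi₁, hgi₂] at this
      exact Option.some_injective _ this
    have hwd : w₁.index [d] = some w' := by
      have := index_append t₁ p₁ [d]
      rw [hw', hw₁] at this
      exact this.symm
    have hrel₁ := hpre₁.rel
    have hrel₂ := hpre₂.rel
    have hag₁ := hpre₁.allg
    have hag₂ := hpre₂.allg
    simp only at hrel₁ hrel₂ hag₁ hag₂
    -- the term at p₂ has the same constructor; handle the three directions
    have main : ∃ w₂', t₂.index (p₂ ++ [d]) = some w₂' := by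
      cases d with
      | down =>
        obtain ⟨a₁, rfl⟩ : ∃ a₁, w₁ = .lam a₁ := by
          cases w₁ <;> simp [GTerm.index] at hwd
          exact ⟨_, rfl⟩
        obtain ⟨a₁', rfl⟩ : ∃ a₁', u₁ = .lam a₁' := by
          cases hrel₁ with | lam h => exact ⟨_, rfl⟩
        rw [Gfun_lam hag₁] at hGeq
        obtain ⟨a₂', rfl⟩ : ∃ a₂', u₂ = .lam a₂' := by
          cases u₂ with
          | lam a₂' => exact ⟨_, rfl⟩
          | var j => exact absurd hGeq.symm (fun hh => Gfun_not_lam_of_var hag₂ hh)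
          | gvar g => rw [Gfun_gvar hag₂] at hGeq; cases hGeq
          | app a c => rw [Gfun_app hag₂] at hGeq; cases hGeq
        obtain ⟨b₂, rfl⟩ := rel_head_lam hrel₂ rfl
        refine ⟨b₂, ?_⟩
        rw [index_append, hw₂]
        simp [GTerm.index]
      | left =>
        obtain ⟨a₁, c₁, rfl⟩ : ∃ a₁ c₁, w₁ = .app a₁ c₁ := by
          cases w₁ <;> simp [GTerm.index] at hwd
          exact ⟨_, _, rfl⟩
        obtain ⟨a₁', c₁', rfl⟩ : ∃ a₁' c₁', u₁ = .app a₁' c₁' := by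
          cases hrel₁ with | app ha hb => exact ⟨_, _, rfl⟩
        rw [Gfun_app hag₁] at hGeq
        obtain ⟨a₂', c₂', rfl⟩ : ∃ a₂' c₂', u₂ = .app a₂' c₂' := by
          cases u₂ with
          | app a₂' c₂' => exact ⟨_, _, rfl⟩
          | var j =>
            rw [Gfun_var hag₂] at hGeq
            rcases msubst_var_leaf σ₂ j hag₂ with ⟨k, hk⟩ | ⟨w, hw⟩
            · rw [hk] at hGeq; cases hGeq
            · rw [hw] at hGeq; cases hGeq
          | gvar g => rw [Gfun_gvar hag₂] at hGeq; cases hGeq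
          | lam a => rw [Gfun_lam hag₂] at hGeq; cases hGeq
        obtain ⟨b₂, d₂, rfl⟩ := rel_head_app hrel₂ rfl
        refine ⟨b₂, ?_⟩
        rw [index_append, hw₂]
        simp [GTerm.index]
      | right =>
        obtain ⟨a₁, c₁, rfl⟩ : ∃ a₁ c₁, w₁ = .app a₁ c₁ := by
          cases w₁ <;> simp [GTerm.index] at hwd
          exact ⟨_, _, rfl⟩
        obtain ⟨a₁', c₁', rfl⟩ : ∃ a₁' c₁', u₁ = .app a₁' c₁' := by
          cases hrel₁ with | app ha hb => exact ⟨_, _, rfl⟩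
        rw [Gfun_app hag₁] at hGeq
        obtain ⟨a₂', c₂', rfl⟩ : ∃ a₂' c₂', u₂ = .app a₂' c₂' := by
          cases u₂ with
          | app a₂' c₂' => exact ⟨_, _, rfl⟩
          | var j =>
            rw [Gfun_var hag₂] at hGeq
            rcases msubst_var_leaf σ₂ j hag₂ with ⟨k, hk⟩ | ⟨w, hw⟩
            · rw [hk] at hGeq; cases hGeq
            · rw [hw] at hGeq; cases hGeq
          | gvar g => rw [Gfun_gvar hag₂] at hGeq; cases hGeq
          | lam a => rw [Gfun_lam hag₂] at hGeq; cases hGeq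
        obtain ⟨b₂, d₂, rfl⟩ := rel_head_app hrel₂ rfl
        refine ⟨d₂, ?_⟩
        rw [index_append, hw₂]
        simp [GTerm.index]
    obtain ⟨w₂', hw₂'⟩ := main
    refine ⟨(t₂, p₂ ++ [d]), Trans.dir t₂ p₂ d (by rw [Valid, Set.mem_setOf_eq, hw₂']; rfl), ?_⟩
    refine ⟨hp₁, hp₂, ⟨hc₁, hval⟩, ⟨hc₂, by rw [Valid, Set.mem_setOf_eq, hw₂']; rfl⟩, ?_⟩
    show (globalize t₁).index (p₁ ++ [d]) = (globalize t₂).index (p₂ ++ [d])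
    rw [index_append, index_append, hgi₁, hgi₂] at *
    rw [hGeq]
  | up t qq rr hvar =>
    -- n₁ = (t₁, qq ++ down :: rr), n₁' = (t₁, qq)
    obtain ⟨rb, v, σb, Λq, hinv₁, hval₁, hq₁⟩ := key hc₁ hp₁ hvar rfl
    -- the second component is also a bound variable
    have hgi₂' : (globalize t₂).index p₂ = some (lab rb v) := by rw [← hg, hval₁]
    have hGeq₂ : Gfun (r₂, σ₂, u₂) = lab rb v := by
      rw [hgi₂] at hgi₂'
      exact Option.some_injective _ hgi₂'
    have hrel₂ := hpre₂.rel
    have hag₂ := hpre₂.allg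
    simp only at hrel₂ hag₂
    obtain ⟨i₂, hw₂v⟩ : ∃ i₂, w₂ = .var i₂ := by
      cases w₂ with
      | var i₂ => exact ⟨_, rfl⟩
      | gvar g => exact (isPure_index hp₂ hw₂).elim
      | lam a =>
        obtain ⟨a', rfl⟩ : ∃ a', u₂ = .lam a' := by
          cases hrel₂ with | lam h => exact ⟨_, rfl⟩
        rw [Gfun_lam hag₂] at hGeq₂
        cases hGeq₂
      | app a c =>
        obtain ⟨a', c', rfl⟩ : ∃ a' c', u₂ = .app a' c' := by
          cases hrel₂ with | app ha hb => exact ⟨_, _, rfl⟩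
        rw [Gfun_app hag₂] at hGeq₂
        cases hGeq₂
    subst hw₂v
    have hi₂ : i₂ < lamDepth p₂ := closed_var_lt hc₂ hw₂
    obtain ⟨q₂, b₂, rfl, hb₂⟩ := exists_split hi₂
    obtain ⟨rb₂, v₂, σb₂, Λq₂, hinv₂, hval₂, hq₂⟩ := key hc₂ hp₂ hw₂ hb₂
    have hlabeq : lab rb v = lab rb₂ v₂ := by
      rw [hval₂] at hgi₂'
      exact (Option.some_injective _ hgi₂').symm
    obtain ⟨rfl, rfl⟩ : rb = rb₂ ∧ v = v₂ := by
      simp [lab] at hlabeq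
      exact ⟨hlabeq.1, hlabeq.2⟩
    have hσeq : σb = σb₂ := inv_sigma_unique hinv₁ hinv₂
    refine ⟨(t₂, q₂), Trans.up t₂ q₂ b₂ (by rw [hb₂]; exact hw₂), ?_⟩
    refine ⟨hp₁, hp₂, ⟨hc₁, index_prefix_isSome ⟨Dir.down :: rr, rfl⟩ hn₁.2⟩,
      ⟨hc₂, index_prefix_isSome ⟨Dir.down :: b₂, rfl⟩ hn₂.2⟩, ?_⟩
    show (globalize t₁).index qq = (globalize t₂).index q₂
    rw [hq₁, hq₂, hσeq]

theorem isBisim_RB : IsBisim RB := by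
  intro n₁ n₂ h x
  constructor
  · exact rb_forward h x
  · intro n₂' htr
    obtain ⟨n₁', htr₁, hr⟩ := rb_forward (RB_symm h) x n₂' htr
    exact ⟨n₁', htr₁, RB_symm hr⟩



/-- λ-term nodes that are equal after globalization are bisimilar. -/
theorem globalize_to_bisim (t₁ t₂ : GTerm) (p₁ p₂ : Pos)
    (h₁ : t₁.IsPure) (h₂ : t₂.IsPure)
    (n₁ : IsNode t₁ p₁) (n₂ : IsNode t₂ p₂)
    (hg : (globalize t₁).index p₁ = (globalize t₂).index p₂) :
    Bisim (t₁, p₁) (t₂, p₂) := by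
  exact ⟨RB, isBisim_RB, h₁, h₂, n₁, n₂, hg⟩

end HashAlpha
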